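/- Let H be symmetric positive definite with block-diagonal part D ≻ 0 and Q = D^{-1/2}(L + Lᵀ)D^{-1/2} with ρ(Q) < 1. For q ≥ 0 define the truncated scaling S_q = D^{-1/2}(∑_{t=0}^{q} Qᵗ)D^{-1/2}. Then the unconstrained asymptotic rate matrix Z_q = I − S_q H satisfies Z_q = D^{-1/2} Q^{q+1} D^{1/2}, hence ρ(Z_q) = ρ(Q)^{q+1} → 0 as q → ∞. -/

import Mathlib

open Matrix Filter

/-- The square root of a positive semidefinite matrix (as in Mathlib of December 2024). -/
noncomputable def Matrix.PosSemidef.sqrt {n 𝕜 : Type*} [Fintype n] [RCLike 𝕜] [PartialOrder 𝕜] [DecidableEq n]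
    {A : Matrix n n 𝕜} (hA : A.PosSemidef) : Matrix n n 𝕜 :=
  hA.1.eigenvectorUnitary.1 * diagonal ((↑) ∘ Real.sqrt ∘ hA.1.eigenvalues) *
    (star hA.1.eigenvectorUnitary : Matrix n n 𝕜)

/-- The spectral radius of a real matrix. -/
noncomputable def specRad {n : ℕ} (A : Matrix (Fin n) (Fin n) ℝ) : ℝ :=
  sSup ((‖·‖) '' spectrum ℂ (A.map (algebraMap ℝ ℂ)))

lemma sSup_pow_image {T : Set ℝ} (hT : T.Finite) (h0 : ∀ x ∈ T, 0 ≤ x) (k : ℕ) (hk : 0 < k) :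
    sSup ((fun x => x ^ k) '' T) = (sSup T) ^ k := by
  rcases T.eq_empty_or_nonempty with rfl | hne
  · simp [Real.sSup_empty, zero_pow hk.ne']
  · have hmem := hne.csSup_mem hT
    apply le_antisymm
    · exact csSup_le (hne.image _) (by
        rintro y ⟨x, hx, rfl⟩
        exact pow_le_pow_left₀ (h0 x hx) (le_csSup hT.bddAbove hx) k)
    · exact le_csSup (hT.image _).bddAbove (Set.mem_image_of_mem _ hmem)

theorem stmt12 {n nq : ℕ} (blk : Fin n → Fin nq)
    (H D : Matrix (Fin n) (Fin n) ℝ)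
    (hH : H.PosDef) (hD : D.PosDef)
    -- `D` is the block-diagonal part of `H`
    (hDdef : ∀ j k, D j k = if blk j = blk k then H j k else 0)
    (Q : Matrix (Fin n) (Fin n) ℝ)
    (hQdef : Q = 1 - (hD.posSemidef.sqrt)⁻¹ * H * (hD.posSemidef.sqrt)⁻¹)
    (hρ : specRad Q < 1)
    (S Z : ℕ → Matrix (Fin n) (Fin n) ℝ)
    (hS : ∀ q, S q =
      (hD.posSemidef.sqrt)⁻¹ * (∑ t ∈ Finset.range (q + 1), Q ^ t) * (hD.posSemidef.sqrt)⁻¹)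
    (hZ : ∀ q, Z q = 1 - S q * H) :
    (∀ q, Z q = (hD.posSemidef.sqrt)⁻¹ * Q ^ (q + 1) * hD.posSemidef.sqrt) ∧
      (∀ q, specRad (Z q) = specRad Q ^ (q + 1)) ∧
      Tendsto (fun q => specRad (Z q)) atTop (nhds 0) := by
  set R := hD.posSemidef.sqrt with hRdef
  have hRR : R * R = D := by
    have hps := hD.posSemidef
    rw [hRdef, Matrix.PosSemidef.sqrt]
    conv_rhs => rw [hps.1.spectral_theorem, Unitary.conjStarAlgAut_apply]
    simp only [Matrix.mul_assoc]
    rw [← Matrix.mul_assoc (star (hps.1.eigenvectorUnitary : Matrix (Fin n) (Fin n) ℝ)),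
      Unitary.star_mul_self_of_mem hps.1.eigenvectorUnitary.prop, Matrix.one_mul, ← Matrix.mul_assoc (diagonal _),
      diagonal_mul_diagonal]
    congr 2
    ext i
    simp [diagonal_apply, Real.mul_self_sqrt (hps.eigenvalues_nonneg i)]
  have hRdet : IsUnit R.det := by
    have h1 : R.det * R.det = D.det := by rw [← det_mul, hRR]
    refine isUnit_iff_ne_zero.mpr fun h => ?_
    rw [h, mul_zero] at h1
    exact hD.det_pos.ne h1
  have hinv : R⁻¹ * R = 1 := nonsing_inv_mul R hRdet
  have hinv' : R * R⁻¹ = 1 := mul_nonsing_inv R hRdet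
  have hHQ : H = R * (1 - Q) * R := by
    have h1 : R⁻¹ * H * R⁻¹ = 1 - Q := by rw [hQdef, sub_sub_cancel]
    calc H = (R * R⁻¹) * H * (R⁻¹ * R) := by rw [hinv', hinv, Matrix.one_mul, Matrix.mul_one]
    _ = R * (R⁻¹ * H * R⁻¹) * R := by simp only [Matrix.mul_assoc]
    _ = R * (1 - Q) * R := by rw [h1]
  have key : ∀ q, Z q = R⁻¹ * Q ^ (q + 1) * R := by
    intro q
    have hgeo : (∑ t ∈ Finset.range (q + 1), Q ^ t) * (1 - Q) = 1 - Q ^ (q + 1) := by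
      rw [show (1 - Q) = -(Q - 1) by rw [neg_sub], mul_neg, geom_sum_mul, neg_sub]
    rw [hZ, hS, hHQ]
    have e : (R⁻¹ * (∑ t ∈ Finset.range (q + 1), Q ^ t) * R⁻¹) * (R * ((1 - Q) * R))
        = R⁻¹ * ((1 - Q ^ (q + 1)) * R) := by
      simp only [Matrix.mul_assoc]
      rw [nonsing_inv_mul_cancel_left _ _ hRdet]
      congr 1
      rw [← Matrix.mul_assoc, hgeo]
    rw [show R * (1 - Q) * R = R * ((1 - Q) * R) from Matrix.mul_assoc .., e,
      Matrix.sub_mul, Matrix.one_mul, Matrix.mul_sub, hinv, sub_sub_cancel, Matrix.mul_assoc]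
  refine ⟨key, ?_⟩
  set f : Matrix (Fin n) (Fin n) ℝ →+* Matrix (Fin n) (Fin n) ℂ := (algebraMap ℝ ℂ).mapMatrix with hf
  have hmap : ∀ A : Matrix (Fin n) (Fin n) ℝ, A.map (algebraMap ℝ ℂ) = f A := fun A => rfl
  have hspec : ∀ q, spectrum ℂ ((Z q).map (algebraMap ℝ ℂ))
      = spectrum ℂ ((Q.map (algebraMap ℝ ℂ)) ^ (q + 1)) := by
    intro q
    have hu1 : f R * f R⁻¹ = 1 := by rw [← _root_.map_mul, hinv', _root_.map_one]
    have hu2 : f R⁻¹ * f R = 1 := by rw [← _root_.map_mul, hinv, _root_.map_one]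
    set u : (Matrix (Fin n) (Fin n) ℂ)ˣ := ⟨f R, f R⁻¹, hu1, hu2⟩ with hu
    have h3 : (Z q).map (algebraMap ℝ ℂ)
        = (↑u⁻¹ : Matrix (Fin n) (Fin n) ℂ) * (Q.map (algebraMap ℝ ℂ)) ^ (q + 1)
          * (↑u : Matrix (Fin n) (Fin n) ℂ) := by
      rw [hmap, key q, _root_.map_mul, _root_.map_mul, hmap, ← _root_.map_pow]
      rfl
    rw [h3, spectrum.units_conjugate']
  have hpow : ∀ q, specRad (Z q) = specRad Q ^ (q + 1) := by
    intro q
    have h1 : spectrum ℂ ((Q.map (algebraMap ℝ ℂ)) ^ (q + 1))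
        = (· ^ (q + 1)) '' spectrum ℂ (Q.map (algebraMap ℝ ℂ)) :=
      spectrum.map_pow_of_pos _ q.succ_pos
    have h2 : (‖·‖) '' ((· ^ (q + 1)) '' spectrum ℂ (Q.map (algebraMap ℝ ℂ)))
        = (fun x => x ^ (q + 1)) '' ((‖·‖) '' spectrum ℂ (Q.map (algebraMap ℝ ℂ))) := by
      rw [Set.image_image, Set.image_image]
      exact Set.image_congr fun z _ => by simp [norm_pow]
    rw [specRad, hspec q, h1, h2,
      sSup_pow_image ((Matrix.finite_spectrum _).image _)
        (by rintro x ⟨z, _, rfl⟩; exact norm_nonneg z) _ q.succ_pos]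
    rfl
  refine ⟨hpow, ?_⟩
  have hρ0 : 0 ≤ specRad Q :=
    Real.sSup_nonneg (by rintro x ⟨z, _, rfl⟩; exact norm_nonneg z)
  have h4 : Tendsto (fun q : ℕ => specRad Q ^ (q + 1)) atTop (nhds 0) :=
    (tendsto_pow_atTop_nhds_zero_of_lt_one hρ0 hρ).comp (tendsto_add_atTop_nat 1)
  simpa only [hpow] using h4
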